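/- arXiv:1805.06279 — 6 statements merged into one kernel-verified Lean document; each statement's English description precedes it below -/
import Mathlib

section
/- There exists an N₀ such that for every N ≥ N₀ and every 2-colouring of the interval [N, 10⁴·N⁴], there is a monochromatic solution (x, y, z) to x + y = z² with x, y, z ∈ [N, 10⁴·N⁴]. -/
/-- Bezout-style solvability. -/
lemma exists_add_mul_dvd (U V a : ℕ) (hV : 0 < V) (h : Nat.gcd U V ∣ a) :
    ∃ j : ℕ, V ∣ (a + j * U) := by
  obtain ⟨m, hm⟩ := h
  have hb := Nat.gcd_eq_gcd_ab U V
  set A := Nat.gcdA U V with hA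
  set B := Nat.gcdB U V with hB
  have hVZ : (V : ℤ) ≠ 0 := by exact_mod_cast hV.ne'
  set z : ℤ := (-(m * A)) % V with hz
  have hz0 : 0 ≤ z := Int.emod_nonneg _ hVZ
  refine ⟨z.toNat, ?_⟩
  have hjz : (z.toNat : ℤ) = z := Int.toNat_of_nonneg hz0
  have key : (V : ℤ) ∣ ((a : ℤ) + (z.toNat : ℤ) * U) := by
    rw [hjz]
    have h1 : (a : ℤ) = (Nat.gcd U V : ℤ) * m := by exact_mod_cast hm
    have h2 : (V:ℤ) ∣ (z + m * A) :=
      ⟨-((-(m * A)) / V), by rw [hz, Int.emod_def]; ring⟩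
    have expand : (a : ℤ) + z * U = U * (z + m * A) + V * (m * B) := by
      rw [h1, hb]; ring
    rw [expand]
    exact dvd_add (Dvd.dvd.mul_left h2 U) (Dvd.intro _ rfl)
  exact_mod_cast key

/-- The "water-jug" walk lemma. -/
lemma walk {P : ℕ → Prop} (U V lo hi s T : ℕ) (hU : 0 < U) (hV : 0 < V)
    (hs : P s) (hls : lo ≤ s) (hsT : s ≤ T) (hdvd : Nat.gcd U V ∣ T - s)
    (hloT : lo + V ≤ T) (hhi : T + U + V ≤ hi)
    (up : ∀ x, lo ≤ x → x + U ≤ hi → P x → P (x + U))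
    (down : ∀ x, lo + V ≤ x → x ≤ hi → P x → P (x - V)) : P T := by
  have climb : ∀ i, s + i * U ≤ T + U → P (s + i * U) := by
    intro i
    induction i with
    | zero => intro _; simpa using hs
    | succ i ih =>
      intro hle
      have h1 : s + (i+1) * U = (s + i * U) + U := by ring
      rw [h1] at hle ⊢
      exact up _ (by omega) (by omega) (ih (by omega))
  obtain ⟨m, hm1, hm2⟩ : ∃ m, T ≤ s + m * U ∧ s + m * U < T + U := by
    refine ⟨(T - s + U - 1) / U, ?_, ?_⟩ <;>
    · have h := Nat.div_add_mod (T - s + U - 1) U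
      have h2 : (T - s + U - 1) % U < U := Nat.mod_lt _ hU
      have h3 : U * ((T - s + U - 1) / U) = ((T - s + U - 1) / U) * U := Nat.mul_comm _ _
      omega
  set a := s + m * U - T with ha
  have hA1 : T + a = s + m * U := by omega
  have haU : a < U := by omega
  have hga : Nat.gcd U V ∣ a := by
    have h1 : Nat.gcd U V ∣ m * U := Dvd.dvd.mul_left (Nat.gcd_dvd_left U V) m
    have h2 : a + (T - s) = m * U := by omega
    have h3 : Nat.gcd U V ∣ a + (T - s) := h2 ▸ h1
    have := Nat.dvd_sub h3 hdvd
    simpa using this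
  obtain ⟨j, hj⟩ := exists_add_mul_dvd U V a hV hga
  have hdesc : ∀ k y, T ≤ y → y + k * V ≤ hi → P (y + k * V) → P y := by
    intro k
    induction k with
    | zero => intro y _ _ h; simpa using h
    | succ k ih =>
      intro y hy hle hP
      have h1 : y + (k+1) * V = (y + k * V) + V := by ring
      rw [h1] at hle hP
      have h2 := down (y + k * V + V) (by omega) (by omega) hP
      have h3 : y + k * V + V - V = y + k * V := by omega
      rw [h3] at h2
      exact ih y hy (by omega) h2
  have main : ∀ i, i ≤ j → P (T + (a + i * U) % V) := by
    intro i
    induction i with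
    | zero =>
      intro _
      simp only [Nat.zero_mul, Nat.add_zero]
      have hml : a % V < V := Nat.mod_lt _ hV
      have hmd := Nat.mod_add_div a V
      have hcm : V * (a / V) = (a / V) * V := Nat.mul_comm _ _
      refine hdesc (a / V) (T + a % V) (by omega) (by omega) ?_
      have heq : T + a % V + a / V * V = T + a := by omega
      rw [heq, hA1]
      exact climb m (by omega)
    | succ i ih =>
      intro hij
      have hP := ih (by omega)
      set w := (a + i * U) % V with hw
      have hwV : w < V := Nat.mod_lt _ hV
      have hPu := up (T + w) (by omega) (by omega) hP
      have hmod : (w + U) % V = (a + (i+1) * U) % V := by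
        rw [hw, Nat.mod_add_mod]
        congr 1
        ring
      have hwu : (w + U) % V < V := Nat.mod_lt _ hV
      have hmd := Nat.mod_add_div (w + U) V
      have hcm : V * ((w + U) / V) = ((w + U) / V) * V := Nat.mul_comm _ _
      refine hdesc ((w + U) / V) (T + (a + (i+1) * U) % V) (by omega) (by omega) ?_
      have heq : T + (a + (i+1) * U) % V + (w + U) / V * V = T + w + U := by omega
      rw [heq]
      exact hPu
  have hfin := main j le_rfl
  have hzero : (a + j * U) % V = 0 := by
    obtain ⟨t, ht⟩ := hj
    simp [ht, Nat.mul_mod_right]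
  rw [hzero] at hfin
  simpa using hfin

lemma fin2_eq_of_ne_of_ne : ∀ a b r : Fin 2, a ≠ r → b ≠ r → a = b := by decide
lemma fin2_eq_of_ne : ∀ a b r : Fin 2, a ≠ b → b ≠ r → a = r := by decide

/-- If there is no switch in `[lo, hi)` then `c` is constant on `[lo, hi]`. -/
lemma run_const (c : ℕ → Fin 2) (lo hi : ℕ)
    (h : ∀ t, lo ≤ t → t < hi → c (t+1) = c t) :
    ∀ t, lo ≤ t → t ≤ hi → c t = c lo := by
  intro t ht1 ht2
  induction t with
  | zero =>
    have : lo = 0 := by omega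
    rw [this]
  | succ t ih =>
    rcases Nat.lt_or_ge lo (t+1) with h1 | h1
    · have h2 : lo ≤ t := by omega
      rw [h t h2 (by omega)]
      exact ih h2 (by omega)
    · have : lo = t + 1 := by omega
      rw [this]

/-- Run machinery: a constant run `[cs, ds]` with a switch at `ds+1` and
`4cs ≤ ds+1` yields a contradiction. -/
lemma mach (n : ℕ) (c : ℕ → Fin 2) (hn : 100 ≤ n)
    (pairC : ∀ z u v, n ≤ z → z ≤ 100*n^2 → n ≤ u → n ≤ v → u + v = z^2 →
      c u = c v → c v = c z → False)
    (cs ds : ℕ) (r : Fin 2) (hcs : n ≤ cs) (h4 : 4 * cs ≤ ds + 1)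
    (hds : ds + 1 ≤ 100*n^2)
    (hrun : ∀ t, cs ≤ t → t ≤ ds → c t = r) (hsw : c (ds+1) ≠ r) : False := by
  have hnds : n ≤ ds := by omega
  have hrds : c ds = r := hrun ds (by omega) le_rfl
  have step : ∀ x w, n ≤ x → n ≤ w → x + w = ds^2 → c x = r → c (x + (2*ds+1)) = r := by
    intro x w hx hw hsum hcx
    have hcw : c w ≠ r := by
      intro hcw
      exact pairC ds x w hnds (by omega) hx hw hsum (by rw [hcx, hcw]) (by rw [hcw, hrds])
    have hsum2 : w + (x + (2*ds+1)) = (ds+1)^2 := by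
      have : (ds+1)^2 = ds^2 + 2*ds + 1 := by ring
      omega
    have hweq : c w = c (ds+1) := fin2_eq_of_ne_of_ne _ _ r hcw hsw
    by_contra hne
    have hcv : c (x + (2*ds+1)) = c w := fin2_eq_of_ne_of_ne _ _ r hne hcw
    exact pairC (ds+1) w (x + (2*ds+1)) (by omega) hds hw (by omega) hsum2
      hcv.symm (hcv.trans hweq)
  obtain ⟨s₁, s₂, k, hs₁l, hs₁u, hs₂l, hs₂u, hkey⟩ :
      ∃ s₁ s₂ k, cs ≤ s₁ ∧ s₁ ≤ ds ∧ cs ≤ s₂ ∧ s₂ ≤ ds ∧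
        s₁ + s₂ + k * (2*ds+1) = ds^2 := by
    rcases Nat.even_or_odd ds with ⟨e, he⟩ | ⟨e, he⟩
    · -- ds = e + e, with e = f + 1
      obtain ⟨f, hf⟩ : ∃ f, e = f + 1 := ⟨e - 1, by omega⟩
      refine ⟨f + 2, ds, f, by omega, by omega, by omega, le_rfl, ?_⟩
      subst hf he
      ring
    · -- ds = 2e+1
      obtain ⟨t, hts⟩ : ∃ t, cs + t = e + 1 := ⟨e + 1 - cs, by omega⟩
      refine ⟨cs, t, e, le_rfl, by omega, by omega, by omega, ?_⟩
      subst he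
      have h1 : cs + t + e * (2 * (2*e+1) + 1) = (e + 1) + e * (4*e+3) := by
        have h2 : e * (2 * (2*e+1) + 1) = e * (4*e+3) := by ring
        omega
      rw [h1]
      ring
  -- propagate: c (s₂ + i*(2ds+1)) = r for i ≤ k
  have key : ∀ i, i ≤ k → c (s₂ + i * (2*ds+1)) = r := by
    intro i
    induction i with
    | zero => intro _; simpa using hrun s₂ hs₂l hs₂u
    | succ i ih =>
      intro hik
      have hP := ih (by omega)
      have hmul : i * (2*ds+1) + (k - i) * (2*ds+1) = k * (2*ds+1) := by
        rw [← Nat.add_mul]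
        congr 1
        omega
      have hsum : (s₂ + i * (2*ds+1)) + (s₁ + (k - i) * (2*ds+1)) = ds^2 := by omega
      have := step (s₂ + i * (2*ds+1)) (s₁ + (k - i) * (2*ds+1)) (by omega) (by omega)
        hsum hP
      have heq : s₂ + i * (2*ds+1) + (2*ds+1) = s₂ + (i+1) * (2*ds+1) := by ring
      rwa [heq] at this
  -- final contradiction
  have hfin := key k le_rfl
  have hs1r : c s₁ = r := hrun s₁ hs₁l hs₁u
  exact pairC ds (s₂ + k * (2*ds+1)) s₁ hnds (by omega) (by omega) (by omega)
    (by omega) (by rw [hfin, hs1r]) (by rw [hs1r, hrds])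

section
variable {n : ℕ} {c : ℕ → Fin 2}

/-- Upward propagation step at a switch `(d, d+1)` with `c d = r ≠ c (d+1)`. -/
lemma stepUp (pairC : ∀ z u v, n ≤ z → z ≤ 100*n^2 → n ≤ u → n ≤ v → u + v = z^2 →
      c u = c v → c v = c z → False)
    (d : ℕ) (r : Fin 2) (hnd : n ≤ d) (hd1 : d + 1 ≤ 100*n^2)
    (hcd : c d = r) (hcd1 : c (d+1) ≠ r) :
    ∀ x w, n ≤ x → n ≤ w → x + w = d^2 → c x = r → c (x + (2*d+1)) = r := by
  intro x w hx hw hsum hcx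
  have hcw : c w ≠ r := by
    intro hcw
    exact pairC d x w hnd (by omega) hx hw hsum (by rw [hcx, hcw]) (by rw [hcw, hcd])
  have hsum2 : w + (x + (2*d+1)) = (d+1)^2 := by
    have : (d+1)^2 = d^2 + 2*d + 1 := by ring
    omega
  have hweq : c w = c (d+1) := fin2_eq_of_ne_of_ne _ _ r hcw hcd1
  by_contra hne
  have hcv : c (x + (2*d+1)) = c w := fin2_eq_of_ne_of_ne _ _ r hne hcw
  exact pairC (d+1) w (x + (2*d+1)) (by omega) hd1 hw (by omega) hsum2
    hcv.symm (hcv.trans hweq)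

/-- Downward propagation step at a switch `(d, d+1)` with `c (d+1) = r ≠ c d`. -/
lemma stepDown (pairC : ∀ z u v, n ≤ z → z ≤ 100*n^2 → n ≤ u → n ≤ v → u + v = z^2 →
      c u = c v → c v = c z → False)
    (d : ℕ) (r : Fin 2) (hnd : n ≤ d) (hd1 : d + 1 ≤ 100*n^2)
    (hcd1 : c (d+1) = r) (hcd : c d ≠ r) :
    ∀ x v, (2*d+1) + n ≤ x → n ≤ v → x + v = (d+1)^2 → c x = r → c (x - (2*d+1)) = r := by
  intro x v hx hv hsum hcx
  have hcv : c v ≠ r := by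
    intro hcv
    exact pairC (d+1) x v (by omega) hd1 (by omega) hv hsum (by rw [hcx, hcv]) (by rw [hcv, hcd1])
  have hsum2 : (x - (2*d+1)) + v = d^2 := by
    have : (d+1)^2 = d^2 + 2*d + 1 := by ring
    omega
  have hveq : c v = c d := fin2_eq_of_ne_of_ne _ _ r hcv hcd
  by_contra hne
  have hcu : c (x - (2*d+1)) = c v := fin2_eq_of_ne_of_ne _ _ r hne hcv
  exact pairC d (x - (2*d+1)) v hnd (by omega) (by omega) hv hsum2
    hcu (hveq)

end

/-- Zigzag: two nearby switches `σ₁ < σ₂ ≤ 4σ₁+2` with a constant run between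
them yield a contradiction. -/
lemma zig {n : ℕ} {c : ℕ → Fin 2} (hn : 100 ≤ n)
    (pairC : ∀ z u v, n ≤ z → z ≤ 100*n^2 → n ≤ u → n ≤ v → u + v = z^2 →
      c u = c v → c v = c z → False)
    (σ₁ σ₂ : ℕ) (hσ₁n : n ≤ σ₁) (hlt : σ₁ < σ₂) (hσ₂ : σ₂ + 1 ≤ 100*n^2)
    (hC2 : σ₂ ≤ 4*σ₁ + 2)
    (hrun : ∀ t, σ₁ + 1 ≤ t → t ≤ σ₂ → c t = c (σ₁+1))
    (hsw1 : c σ₁ ≠ c (σ₁+1)) (hsw2 : c (σ₂+1) ≠ c σ₂) : False := by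
  set r := c σ₁ with hr
  set rb := c (σ₁+1) with hrb
  have hrrb : r ≠ rb := hsw1
  have hcσ₂ : c σ₂ = rb := hrun σ₂ (by omega) le_rfl
  have hcσ₂1 : c (σ₂+1) = r := by
    have h1 : c (σ₂+1) ≠ rb := by rw [← hcσ₂]; exact hsw2
    exact fin2_eq_of_ne_of_ne _ _ rb h1 hrrb
  set M := 2*σ₁+1 with hM
  set M' := 2*σ₂+1 with hM'
  set g := Nat.gcd M M' with hg
  have hM0 : 0 < M := by omega
  have hM'0 : 0 < M' := by omega
  have hgM : g ∣ M := Nat.gcd_dvd_left _ _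
  have hgM' : g ∣ M' := Nat.gcd_dvd_right _ _
  have hg0 : 0 < g := Nat.gcd_pos_of_pos_left _ hM0
  have hgodd : g % 2 = 1 := by
    rcases Nat.even_or_odd g with ⟨e, he⟩ | ⟨e, he⟩
    · exfalso
      have h2 : (2:ℕ) ∣ g := ⟨e, by omega⟩
      have h3 : (2:ℕ) ∣ M := h2.trans hgM
      omega
    · omega
  have hgdvd : g ∣ (σ₂ - σ₁) := by
    have h1 : g ∣ (M' - M) := Nat.dvd_sub hgM' hgM
    have h2 : M' - M = 2 * (σ₂ - σ₁) := by omega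
    rw [h2] at h1
    have hco : Nat.Coprime g 2 := by
      have : Nat.gcd g 2 = 1 := by
        rw [Nat.gcd_comm, Nat.gcd_rec]
        simp [hgodd]
      exact this
    exact (Nat.Coprime.dvd_of_dvd_mul_left hco h1)
  have hgle : g ≤ σ₂ - σ₁ := Nat.le_of_dvd (by omega) hgdvd
  have hgleM : g ≤ M := Nat.le_of_dvd hM0 hgM
  -- target T
  obtain ⟨q, rmod, hdm, hmod⟩ : ∃ q rmod, g * q + rmod = n + M + M' ∧ rmod < g :=
    ⟨(n+M+M')/g, (n+M+M')%g, Nat.div_add_mod _ _, Nat.mod_lt _ hg0⟩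
  set K := q + 2 with hK
  set T := σ₁ + g * K with hT
  have hgK : g * K = g * q + 2 * g := by rw [hK]; ring
  have hTlow : n + M + M' + σ₁ + g + 1 ≤ T := by
    rw [hT]
    omega
  have hTup : T ≤ σ₁ + n + M + M' + 2*g := by
    rw [hT]
    omega
  have hsq : σ₁^2 = σ₁ * σ₁ := by ring
  have h100 : 100 * σ₁ ≤ σ₁ * σ₁ := Nat.mul_le_mul_right σ₁ (le_trans hn hσ₁n)
  have hwin : T + M + M' + n + n ≤ σ₁^2 := by
    rw [hsq]
    omega
  have hσ₁sq : σ₁ ≤ σ₁^2 := by rw [hsq]; nlinarith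
  have hσ₂sq : σ₁^2 ≤ σ₂^2 := Nat.pow_le_pow_left (by omega) 2
  have hσ₂1sq : (σ₁+1)^2 ≤ (σ₂+1)^2 := Nat.pow_le_pow_left (by omega) 2
  have hs1sq : σ₁^2 + 2*σ₁ + 1 = (σ₁+1)^2 := by ring
  have hs2sq : σ₂^2 + 2*σ₂ + 1 = (σ₂+1)^2 := by ring
  -- walk for colour r from σ₁ to T
  have w0 : c T = r := by
    refine walk (P := fun x => c x = r) M M' n (σ₁^2 - n) σ₁ T hM0 hM'0 rfl hσ₁n (by omega) ?_ (by omega) (by omega)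
      ?_ ?_
    · have : T - σ₁ = g * K := by omega
      rw [this]
      exact Dvd.intro K rfl
    · -- up rule
      intro x hx hxle hP
      have hw : x + (σ₁^2 - x) = σ₁^2 := by omega
      exact stepUp pairC σ₁ r hσ₁n (by omega) rfl hsw1.symm x (σ₁^2 - x) hx (by omega) hw hP
    · -- down rule
      intro x hx hxle hP
      have hv : x + ((σ₂+1)^2 - x) = (σ₂+1)^2 := by omega
      exact stepDown pairC σ₂ r (by omega) hσ₂ hcσ₂1 (by rw [hcσ₂]; exact hrrb.symm)
        x ((σ₂+1)^2 - x) (by omega) (by omega) hv hP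
  -- walk for colour rb from σ₁+g to T
  have w1 : c T = rb := by
    refine walk (P := fun x => c x = rb) M' M n (σ₁^2 - n) (σ₁ + g) T hM'0 hM0
      (hrun (σ₁+g) (by omega) (by omega)) (by omega) (by omega) ?_ (by omega) (by omega)
      ?_ ?_
    · have hK1 : K - 1 + 1 = K := by omega
      have h2 : g * (K - 1) + g = g * K := by
        calc g * (K-1) + g = g * (K - 1 + 1) := by ring
        _ = g * K := by rw [hK1]
      have h1 : T - (σ₁ + g) = g * (K - 1) := by omega
      rw [h1, Nat.gcd_comm]
      exact Dvd.intro (K-1) rfl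
    · -- up rule (step M')
      intro y hy hyle hP
      have hw : y + (σ₂^2 - y) = σ₂^2 := by omega
      exact stepUp pairC σ₂ rb (by omega) hσ₂ hcσ₂ (by rw [hcσ₂1]; exact hrrb)
        y (σ₂^2 - y) hy (by omega) hw hP
    · -- down rule (step M)
      intro y hy hyle hP
      have hv : y + ((σ₁+1)^2 - y) = (σ₁+1)^2 := by omega
      exact stepDown pairC σ₁ rb hσ₁n (by omega) rfl hsw1
        y ((σ₁+1)^2 - y) (by omega) (by omega) hv hP
  exact hrrb (w0 ▸ w1 ▸ rfl)

/-- There is N₀ such that for every N ≥ N₀, any 2-colouring of [N, 10⁴N⁴] admits a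
monochromatic solution to x + y = z² inside [N, 10⁴N⁴]. -/
theorem mono_solution_in_interval :
    ∃ N₀ : ℕ, ∀ N : ℕ, N₀ ≤ N → ∀ c : ℕ → Fin 2,
      ∃ x y z : ℕ,
        N ≤ x ∧ x ≤ 10 ^ 4 * N ^ 4 ∧
        N ≤ y ∧ y ≤ 10 ^ 4 * N ^ 4 ∧
        N ≤ z ∧ z ≤ 10 ^ 4 * N ^ 4 ∧
        x + y = z ^ 2 ∧ c x = c y ∧ c y = c z := by
  classical
  refine ⟨100, fun n hn c => ?_⟩
  by_contra hno
  have hn1 : 1 ≤ n := by omega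
  have hn2 : n ≤ n^2 := Nat.le_self_pow (by norm_num) n
  have hn24 : n^2 ≤ n^4 := Nat.pow_le_pow_right hn1 (by norm_num)
  have h10 : (10:ℕ)^4 = 10000 := by norm_num
  have pairC : ∀ z u v, n ≤ z → z ≤ 100*n^2 → n ≤ u → n ≤ v → u + v = z^2 →
      c u = c v → c v = c z → False := by
    intro z u v hz1 hz2 hu hv hsum e1 e2
    have hz4 : z^2 ≤ 10^4 * n^4 := by
      calc z^2 ≤ (100*n^2)^2 := Nat.pow_le_pow_left hz2 2
      _ = 10^4 * n^4 := by ring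
    exact hno ⟨u, v, z, hu, by omega, hv, by omega, hz1, by omega, hsum, e1, e2⟩
  set W := 100 * n^2 with hW
  have hnW : n + 1 ≤ W := by omega
  by_cases h1 : ∃ σ, n ≤ σ ∧ σ + 1 ≤ W ∧ c σ ≠ c (σ+1)
  · set σ₁ := Nat.find h1 with hσ₁def
    obtain ⟨hσ₁n, hσ₁W, hσ₁sw⟩ := Nat.find_spec h1
    have hbelow : ∀ t, n ≤ t → t ≤ σ₁ → c t = c n := by
      refine run_const c n σ₁ (fun t ht1 ht2 => ?_)
      have hq := Nat.find_min h1 ht2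
      push_neg at hq
      exact (hq ht1 (by omega)).symm
    have hcσ₁ : c σ₁ = c n := hbelow σ₁ hσ₁n le_rfl
    by_cases h2 : ∃ σ, σ₁ < σ ∧ σ + 1 ≤ W ∧ c σ ≠ c (σ+1)
    · -- at least two switches
      set σ₂ := Nat.find h2 with hσ₂def
      obtain ⟨hσ₂l, hσ₂W, hσ₂sw⟩ := Nat.find_spec h2
      have hbetween : ∀ t, σ₁ + 1 ≤ t → t ≤ σ₂ → c t = c (σ₁+1) := by
        refine run_const c (σ₁+1) σ₂ (fun t ht1 ht2 => ?_)
        have hq := Nat.find_min h2 ht2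
        push_neg at hq
        exact (hq (by omega) (by omega)).symm
      by_cases hC : 4*(σ₁+1) ≤ σ₂ + 1
      · -- long middle run: machinery
        have hcσ₂ : c σ₂ = c (σ₁+1) := hbetween σ₂ (by omega) le_rfl
        refine mach n c hn pairC (σ₁+1) σ₂ (c (σ₁+1)) (by omega) (by omega) hσ₂W
          hbetween ?_
        intro h
        exact hσ₂sw (hcσ₂.trans h.symm)
      · -- two nearby switches: zigzag
        exact zig hn pairC σ₁ σ₂ hσ₁n hσ₂l hσ₂W (by omega) hbetween hσ₁sw hσ₂sw.symm
    · -- exactly one switch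
      push_neg at h2
      have habove : ∀ t, σ₁ + 1 ≤ t → t ≤ W → c t = c (σ₁+1) := by
        refine run_const c (σ₁+1) W (fun t ht1 ht2 => ?_)
        exact (h2 t (by omega) (by omega)).symm
      by_cases hB : 4*n ≤ σ₁ + 1
      · -- long bottom run: machinery
        refine mach n c hn pairC n σ₁ (c n) le_rfl hB hσ₁W hbelow ?_
        intro h
        exact hσ₁sw (hcσ₁.trans h.symm)
      · -- short bottom run, long top run
        have h5 : c (5*n) = c (σ₁+1) := habove (5*n) (by omega) (by omega)
        have h12 : c (12*n^2) = c (σ₁+1) := habove (12*n^2) (by omega) (by omega)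
        have h13 : c (13*n^2) = c (σ₁+1) := habove (13*n^2) (by omega) (by omega)
        refine pairC (5*n) (12*n^2) (13*n^2) (by omega) (by omega) (by omega) (by omega)
          ?_ (h12.trans h13.symm) (h13.trans h5.symm)
        have : (5*n)^2 = 25*n^2 := by ring
        omega
  · -- no switch at all: constant colouring
    push_neg at h1
    have hconst : ∀ t, n ≤ t → t ≤ W → c t = c n := by
      refine run_const c n W (fun t ht1 ht2 => ?_)
      exact (h1 t ht1 (by omega)).symm
    have hu : c (2*n^2 - 1) = c n := hconst _ (by omega) (by omega)
    have hv : c (2*n^2 + 1) = c n := hconst _ (by omega) (by omega)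
    have hz : c (2*n) = c n := hconst _ (by omega) (by omega)
    refine pairC (2*n) (2*n^2 - 1) (2*n^2 + 1) (by omega) (by omega) (by omega) (by omega)
      ?_ (hu.trans hv.symm) (hv.trans hz.symm)
    have : (2*n)^2 = 4*n^2 := by ring
    omega
end

section
/- For every N ≥ 4, the 2-colouring of the interval [N, N⁴/27] that colours [N, N²/3] with the first colour and (N²/3, N⁴/27] with the second colour admits no monochromatic solution to x + y = z² with all of x, y, z in [N, N⁴/27]. -/
/-- For N ≥ 4, colouring [N, N²/3] with colour 0 and (N²/3, N⁴/27] with colour 1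
avoids monochromatic solutions to x + y = z² inside [N, N⁴/27]. -/
theorem lower_bound_colouring (N : ℕ) (hN : 4 ≤ N) :
    ¬ ∃ x y z : ℕ,
      (N ≤ x ∧ 27 * x ≤ N ^ 4) ∧
      (N ≤ y ∧ 27 * y ≤ N ^ 4) ∧
      (N ≤ z ∧ 27 * z ≤ N ^ 4) ∧
      x + y = z ^ 2 ∧
      (fun n : ℕ => if 3 * n ≤ N ^ 2 then (0 : Fin 2) else 1) x =
        (fun n : ℕ => if 3 * n ≤ N ^ 2 then (0 : Fin 2) else 1) y ∧
      (fun n : ℕ => if 3 * n ≤ N ^ 2 then (0 : Fin 2) else 1) y =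
        (fun n : ℕ => if 3 * n ≤ N ^ 2 then (0 : Fin 2) else 1) z := by
  rintro ⟨x, y, z, ⟨hx1, hx2⟩, ⟨hy1, hy2⟩, ⟨hz1, hz2⟩, heq, hxy, hyz⟩
  simp only at hxy hyz
  by_cases hz : 3 * z ≤ N ^ 2
  · rw [if_pos hz] at hyz
    have hy : 3 * y ≤ N ^ 2 := by
      by_contra h
      rw [if_neg h] at hyz
      exact absurd hyz (by decide)
    rw [if_pos hy] at hxy
    have hx : 3 * x ≤ N ^ 2 := by
      by_contra h
      rw [if_neg h] at hxy
      exact absurd hxy (by decide)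
    nlinarith [sq_nonneg N, hz1, hx, hy, heq]
  · rw [if_neg hz] at hyz
    have hy : ¬ 3 * y ≤ N ^ 2 := by
      intro h
      rw [if_pos h] at hyz
      exact absurd hyz (by decide)
    rw [if_neg hy] at hxy
    have hx : ¬ 3 * x ≤ N ^ 2 := by
      intro h
      rw [if_pos h] at hxy
      exact absurd hxy (by decide)
    push_neg at hz hx hy
    nlinarith [hz, hx2, hy2, heq, sq_nonneg N]
end

section
/- Let c : ℕ → {-1, 1}, let N, k be positive integers with c(k) = 1 and c(k+1) = −1. Suppose that for all i ∈ [N, k² − N] we have c(i) + c(k² − i) ≤ 0, and for all i ∈ [N, (k+1)² − N] we have c(i) + c((k+1)² − i) ≥ 0. Then for every j ∈ [N, k² − N], c(j) ≤ c(j + 2k + 1). -/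
/-- Under the no-monochromatic-solution inequalities for z = k and z = k+1,
the colouring is monotone along residue classes mod 2k+1. -/
theorem monotone_along_classes (c : ℕ → ℤ) (hc : ∀ n, c n = 1 ∨ c n = -1)
    (N k : ℕ) (hN : 1 ≤ N) (hk : 1 ≤ k)
    (hck : c k = 1) (hck1 : c (k + 1) = -1)
    (h1 : ∀ i, N ≤ i → i ≤ k ^ 2 - N → c i + c (k ^ 2 - i) ≤ 0)
    (h2 : ∀ i, N ≤ i → i ≤ (k + 1) ^ 2 - N → c i + c ((k + 1) ^ 2 - i) ≥ 0) :
    ∀ j, N ≤ j → j ≤ k ^ 2 - N → c j ≤ c (j + 2 * k + 1) := by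
  intro j hj1 hj2
  have hNk : N ≤ k ^ 2 := le_trans hj1 (le_trans hj2 (Nat.sub_le _ _))
  have hjk : j ≤ k ^ 2 - N := hj2
  have ha := h1 j hj1 hj2
  have hb := h2 (j + 2 * k + 1) (by omega) (by ring_nf; ring_nf at hjk ⊢; omega)
  have heq : (k + 1) ^ 2 - (j + 2 * k + 1) = k ^ 2 - j := by ring_nf; omega
  rw [heq] at hb
  linarith
end

section
/- Let c : ℕ → {-1, 1}, and let H₁ = {a, a + d, a + 2d, …, a + m₁·d} and H₂ = {b, b + d, b + 2d, …, b + m₂·d} be arithmetic progressions with common difference d > 0 on which c is monotone non-decreasing (with respect to the natural ordering of the progression). Suppose f₁ is the smallest element of H₁ coloured 1 and f₂ is the smallest element of H₂ coloured 1. If T ≡ a + b (mod d), f₁ + f₂ ≤ T, and T ≤ (a + m₁·d) + (b + m₂·d), then there exist u ∈ H₁ and v ∈ H₂ with c(u) = c(v) = 1 and u + v = T. -/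
/-- Two progressions with the same difference, monotone colourings, first 1-coloured
elements f₁, f₂: any T ≡ a+b (mod d) with f₁+f₂ ≤ T ≤ (a+m₁d)+(b+m₂d) is a sum of a
1-coloured element of each progression. -/
theorem sum_of_one_coloured (c : ℕ → ℤ) (hc : ∀ n, c n = 1 ∨ c n = -1)
    (a b d m₁ m₂ f₁ f₂ T : ℕ) (hd : 0 < d)
    (hmono₁ : ∀ s t : ℕ, s ≤ t → t ≤ m₁ → c (a + s * d) ≤ c (a + t * d))
    (hmono₂ : ∀ s t : ℕ, s ≤ t → t ≤ m₂ → c (b + s * d) ≤ c (b + t * d))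
    (hf₁ : ∃ s₁ : ℕ, s₁ ≤ m₁ ∧ f₁ = a + s₁ * d ∧ c f₁ = 1 ∧
      ∀ s : ℕ, s < s₁ → c (a + s * d) ≠ 1)
    (hf₂ : ∃ s₂ : ℕ, s₂ ≤ m₂ ∧ f₂ = b + s₂ * d ∧ c f₂ = 1 ∧
      ∀ s : ℕ, s < s₂ → c (b + s * d) ≠ 1)
    (hT : T ≡ a + b [MOD d]) (hT₁ : f₁ + f₂ ≤ T)
    (hT₂ : T ≤ (a + m₁ * d) + (b + m₂ * d)) :
    ∃ u v : ℕ, (∃ s : ℕ, s ≤ m₁ ∧ u = a + s * d) ∧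
      (∃ s : ℕ, s ≤ m₂ ∧ v = b + s * d) ∧
      c u = 1 ∧ c v = 1 ∧ u + v = T := by
  obtain ⟨s₁, hs₁m, hf₁e, hcf₁, -⟩ := hf₁
  obtain ⟨s₂, hs₂m, hf₂e, hcf₂, -⟩ := hf₂
  have hab : a + b ≤ T := le_trans (by omega : a + b ≤ f₁ + f₂) hT₁
  obtain ⟨k, hk⟩ := (Nat.modEq_iff_dvd' hab).mp hT.symm
  have hTk : T = a + b + d * k := by omega
  have hT₁' : a + s₁ * d + (b + s₂ * d) ≤ a + b + d * k := by
    rw [hf₁e, hf₂e] at hT₁; omega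
  have hs12 : s₁ + s₂ ≤ k := by
    have h1 : d * (s₁ + s₂) ≤ d * k := by
      calc d * (s₁ + s₂) = s₁ * d + s₂ * d := by ring
        _ ≤ d * k := by linarith
    exact Nat.le_of_mul_le_mul_left h1 hd
  have hkm : k ≤ m₁ + m₂ := by
    have h1 : d * k ≤ d * (m₁ + m₂) := by
      have h2 : a + b + d * k ≤ a + m₁ * d + (b + m₂ * d) := by omega
      calc d * k ≤ m₁ * d + m₂ * d := by linarith
        _ = d * (m₁ + m₂) := by ring
    exact Nat.le_of_mul_le_mul_left h1 hd
  set s : ℕ := min m₁ (k - s₂) with hs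
  set t : ℕ := k - s with ht
  have hsm : s ≤ m₁ := min_le_left _ _
  have hs1 : s₁ ≤ s := by omega
  have hs2 : s₂ ≤ t := by omega
  have htm : t ≤ m₂ := by omega
  have hst : s + t = k := by omega
  have cu : c (a + s * d) = 1 := by
    have h := hmono₁ s₁ s hs1 hsm
    rw [hf₁e] at hcf₁
    rcases hc (a + s * d) with h' | h'
    · exact h'
    · rw [hcf₁, h'] at h; norm_num at h
  have cv : c (b + t * d) = 1 := by
    have h := hmono₂ s₂ t hs2 htm
    rw [hf₂e] at hcf₂
    rcases hc (b + t * d) with h' | h'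
    · exact h'
    · rw [hcf₂, h'] at h; norm_num at h
  refine ⟨a + s * d, b + t * d, ⟨s, hsm, rfl⟩, ⟨t, htm, rfl⟩, cu, cv, ?_⟩
  have : s * d + t * d = d * k := by rw [← hst]; ring
  omega
end

section
/- Let c : ℕ → {-1,1}, let k ≥ 1, and suppose c is monotone non-decreasing along each arithmetic progression H_j = {j, j+(2k+1), …} within [N, k²−N] (i.e., c(j) ≤ c(j + (2k+1)) whenever j, j+(2k+1) ∈ [N, k²−N]). For j in a complete residue system, let g(j) be the largest element of H_j coloured −1 (if it exists). If j₁, j₂ satisfy m² ≡ j₁ + j₂ (mod 2k+1), j₁ + j₂ ≤ m², and m² ≤ g(j₁) + g(j₂), then m² can be written as u + v with c(u) = c(v) = −1, u ∈ H_{j₁}, v ∈ H_{j₂}. -/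
/-- If c is monotone along residue classes mod 2k+1 within [N, k²−N], g(j₁), g(j₂) are
the largest −1-coloured elements of H_{j₁}, H_{j₂}, and j₁+j₂ ≤ m² ≤ g(j₁)+g(j₂) with
m² ≡ j₁+j₂ (mod 2k+1), then m² is a sum of two −1-coloured elements. -/
theorem m_sq_as_minus_sum (c : ℕ → ℤ) (hc : ∀ n, c n = 1 ∨ c n = -1)
    (N k m j₁ j₂ g₁ g₂ : ℕ) (hk : 1 ≤ k)
    (hmono : ∀ j, N ≤ j → j + (2 * k + 1) ≤ k ^ 2 - N → c j ≤ c (j + (2 * k + 1)))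
    (hj₁ : N ≤ j₁ ∧ j₁ ≤ k ^ 2 - N) (hj₂ : N ≤ j₂ ∧ j₂ ≤ k ^ 2 - N)
    (hg₁ : N ≤ g₁ ∧ g₁ ≤ k ^ 2 - N ∧ g₁ ≡ j₁ [MOD 2 * k + 1] ∧ c g₁ = -1 ∧
      ∀ u, N ≤ u → u ≤ k ^ 2 - N → u ≡ j₁ [MOD 2 * k + 1] → c u = -1 → u ≤ g₁)
    (hg₂ : N ≤ g₂ ∧ g₂ ≤ k ^ 2 - N ∧ g₂ ≡ j₂ [MOD 2 * k + 1] ∧ c g₂ = -1 ∧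
      ∀ u, N ≤ u → u ≤ k ^ 2 - N → u ≡ j₂ [MOD 2 * k + 1] → c u = -1 → u ≤ g₂)
    (hcong : m ^ 2 ≡ j₁ + j₂ [MOD 2 * k + 1])
    (hlow : j₁ + j₂ ≤ m ^ 2) (hhigh : m ^ 2 ≤ g₁ + g₂) :
    ∃ u v : ℕ, N ≤ u ∧ u ≤ k ^ 2 - N ∧ u ≡ j₁ [MOD 2 * k + 1] ∧
      N ≤ v ∧ v ≤ k ^ 2 - N ∧ v ≡ j₂ [MOD 2 * k + 1] ∧
      c u = -1 ∧ c v = -1 ∧ u + v = m ^ 2 := by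
  obtain ⟨hg₁N, hg₁K, hg₁c, hg₁m, -⟩ := hg₁
  obtain ⟨hg₂N, hg₂K, hg₂c, hg₂m, -⟩ := hg₂
  set d := 2 * k + 1 with hd
  -- monotonicity along the progression
  have key : ∀ s u, N ≤ u → u + d * s ≤ k ^ 2 - N → c u ≤ c (u + d * s) := by
    intro s
    induction s with
    | zero => intro u _ _; simp
    | succ s ih =>
      intro u hu hub
      have h1 : u + d * s ≤ k ^ 2 - N := by
        have : u + d * s ≤ u + d * (s + 1) := by nlinarith
        omega
      have h2 : c u ≤ c (u + d * s) := ih u hu h1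
      have h3 : (u + d * s) + d ≤ k ^ 2 - N := by
        have : u + d * (s + 1) = (u + d * s) + d := by ring
        omega
      have h4 := hmono (u + d * s) (by omega) h3
      have heq : u + d * (s + 1) = (u + d * s) + d := by ring
      rw [heq]
      exact le_trans h2 h4
  -- divisibility of g₁+g₂ - m²
  have hsum : g₁ + g₂ ≡ j₁ + j₂ [MOD d] := hg₁c.add hg₂c
  have hmm : m ^ 2 ≡ g₁ + g₂ [MOD d] := hcong.trans hsum.symm
  obtain ⟨t, ht⟩ := (Nat.modEq_iff_dvd' hhigh).mp hmm
  have hdpos : 0 < d := by omega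
  obtain ⟨A₁, r₁, hdiv₁, hrlt₁⟩ : ∃ A r, g₁ - N = d * A + r ∧ r < d :=
    ⟨_, _, (Nat.div_add_mod (g₁ - N) d).symm, Nat.mod_lt _ hdpos⟩
  obtain ⟨A₂, r₂, hdiv₂, hrlt₂⟩ : ∃ A r, g₂ - N = d * A + r ∧ r < d :=
    ⟨_, _, (Nat.div_add_mod (g₂ - N) d).symm, Nat.mod_lt _ hdpos⟩
  -- j₁ ≥ N + r₁
  have hjr₁ : N + r₁ ≤ j₁ := by
    by_contra h
    push_neg at h
    have hc1 : j₁ ≡ N + r₁ [MOD d] := by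
      have : g₁ ≡ N + r₁ [MOD d] := by
        have : d ∣ g₁ - (N + r₁) := ⟨A₁, by omega⟩
        exact ((Nat.modEq_iff_dvd' (by omega)).mpr this).symm
      exact hg₁c.symm.trans this
    have := (Nat.modEq_iff_dvd' (le_of_lt h)).mp hc1
    have hle := Nat.le_of_dvd (by omega) this
    omega
  have hjr₂ : N + r₂ ≤ j₂ := by
    by_contra h
    push_neg at h
    have hc1 : j₂ ≡ N + r₂ [MOD d] := by
      have : g₂ ≡ N + r₂ [MOD d] := by
        have : d ∣ g₂ - (N + r₂) := ⟨A₂, by omega⟩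
        exact ((Nat.modEq_iff_dvd' (by omega)).mpr this).symm
      exact hg₂c.symm.trans this
    have := (Nat.modEq_iff_dvd' (le_of_lt h)).mp hc1
    have hle := Nat.le_of_dvd (by omega) this
    omega
  -- t ≤ A₁ + A₂
  have htle : t ≤ A₁ + A₂ := by
    by_contra h
    push_neg at h
    have : d * (A₁ + A₂ + 1) ≤ d * t := Nat.mul_le_mul_left d h
    have hexp : d * (A₁ + A₂ + 1) = d * A₁ + d * A₂ + d := by ring
    omega
  set a := min t A₁ with ha
  set b := t - a with hb
  have hbA : b ≤ A₂ := by omega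
  have hab : a + b = t := by omega
  have hda : d * a ≤ d * A₁ := Nat.mul_le_mul_left d (min_le_right _ _)
  have hdb : d * b ≤ d * A₂ := Nat.mul_le_mul_left d hbA
  refine ⟨g₁ - d * a, g₂ - d * b, by omega, by omega, ?_, by omega, by omega, ?_, ?_, ?_, ?_⟩
  · have : g₁ - d * a ≡ g₁ [MOD d] :=
      (Nat.modEq_iff_dvd' (by omega)).mpr ⟨a, by omega⟩
    exact this.trans hg₁c
  · have : g₂ - d * b ≡ g₂ [MOD d] :=
      (Nat.modEq_iff_dvd' (by omega)).mpr ⟨b, by omega⟩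
    exact this.trans hg₂c
  · have h1 : (g₁ - d * a) + d * a = g₁ := by omega
    have h2 := key a (g₁ - d * a) (by omega) (by omega)
    rw [h1] at h2
    rcases hc (g₁ - d * a) with h | h
    · rw [h, hg₁m] at h2; norm_num at h2
    · exact h
  · have h1 : (g₂ - d * b) + d * b = g₂ := by omega
    have h2 := key b (g₂ - d * b) (by omega) (by omega)
    rw [h1] at h2
    rcases hc (g₂ - d * b) with h | h
    · rw [h, hg₂m] at h2; norm_num at h2
    · exact h
  · have : d * t = d * a + d * b := by rw [← hab]; ring
    omega
end

section
/- For any 2-colouring of ℕ and any k with c(k) ≠ c(k+1), if there is no monochromatic solution to x + y = z² with z ∈ {k, k+1} and x, y ∈ [N, max(k,k+1)² − N], then the colouring restricted to each residue class modulo 2k+1 intersected with [N, k² − N] is monotone: writing c(k) = 1, c(k+1) = −1, we have c(j) ≤ c(j + 2k + 1) for all j with j, j + 2k + 1 ∈ [N, k² − N + 2k + 1]. -/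
/-- If c(k) = 1, c(k+1) = −1 and there is no monochromatic solution with z = k or
z = k+1 (in the relevant ranges), then c(j) ≤ c(j + 2k + 1) whenever
j, j + 2k + 1 ∈ [N, k² − N + 2k + 1]. -/
theorem monotone_from_no_solution (c : ℕ → ℤ) (hc : ∀ n, c n = 1 ∨ c n = -1)
    (N k : ℕ) (hN : 1 ≤ N) (hk : 1 ≤ k)
    (hck : c k = 1) (hck1 : c (k + 1) = -1)
    (h1 : ∀ i, N ≤ i → i ≤ k ^ 2 - N → ¬(c i = 1 ∧ c (k ^ 2 - i) = 1))
    (h2 : ∀ i, N ≤ i → i ≤ (k + 1) ^ 2 - N →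
      ¬(c i = -1 ∧ c ((k + 1) ^ 2 - i) = -1)) :
    ∀ j, N ≤ j → j + (2 * k + 1) ≤ k ^ 2 - N + (2 * k + 1) →
      c j ≤ c (j + (2 * k + 1)) := by
  intro j hNj hjle
  have hj : j ≤ k ^ 2 - N := by omega
  rcases hc j with hcj | hcj
  · -- c j = 1, show c (j + 2k+1) = 1
    have hNk2 : N + j ≤ k ^ 2 := by omega
    have hA := h1 j hNj hj
    have hA' : c (k ^ 2 - j) = -1 := by
      rcases hc (k ^ 2 - j) with h | h
      · exact absurd ⟨hcj, h⟩ hA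
      · exact h
    have hkk1 : (k + 1) ^ 2 = k ^ 2 + 2 * k + 1 := by ring
    have hB := h2 (k ^ 2 - j) (by omega) (by omega)
    have heq : (k + 1) ^ 2 - (k ^ 2 - j) = j + (2 * k + 1) := by omega
    rw [heq] at hB
    rcases hc (j + (2 * k + 1)) with h | h
    · rw [hcj, h]
    · exact absurd ⟨hA', h⟩ hB
  · rw [hcj]
    rcases hc (j + (2 * k + 1)) with h | h <;> rw [h] <;> norm_num
end
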